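/- For any l > 0 and I > 0, the additive TMCMC limiting acceptance rate a_T(l) = 4 ∫_0^∞ Φ(−u l √I/2) φ(u) du is strictly greater than the RWMH limiting acceptance rate a_R(l) = 2 Φ(−l √I/2). -/

import Mathlib

open Real MeasureTheory

/-- The standard normal density `φ`. -/
noncomputable def stdNormalPDF (u : ℝ) : ℝ :=
  (Real.sqrt (2 * Real.pi))⁻¹ * Real.exp (-u ^ 2 / 2)

/-- The standard normal CDF `Φ`. -/
noncomputable def stdNormalCDF (t : ℝ) : ℝ :=
  ∫ u in Set.Iic t, stdNormalPDF u

/-!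
For `c > 0` the map `u ↦ Φ(-uc)` is convex on `[0, ∞)` (its derivative `-cφ(uc)` increases
there), so it lies above its tangent line at `u = 1`:
`Φ(-uc) ≥ Φ(-c) - cφ(c)(u - 1)`. Integrating against `φ` over `(0, ∞)`, where `φ` has mass `1/2`
and first moment `1/√(2π)`, gives
`∫₀^∞ Φ(-uc)φ(u) du ≥ Φ(-c)/2 + cφ(c)(1/2 - 1/√(2π)) > Φ(-c)/2`.
-/

open Set Filter ProbabilityTheory

lemma stdNormalPDF_eq_gaussianPDFReal : stdNormalPDF = gaussianPDFReal 0 1 := by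
  ext u
  simp [stdNormalPDF, gaussianPDFReal]

lemma continuous_stdNormalPDF : Continuous stdNormalPDF := by
  unfold stdNormalPDF
  fun_prop

lemma stdNormalPDF_pos (u : ℝ) : 0 < stdNormalPDF u := by
  rw [stdNormalPDF_eq_gaussianPDFReal]
  exact gaussianPDFReal_pos 0 1 u one_ne_zero

lemma stdNormalPDF_neg (u : ℝ) : stdNormalPDF (-u) = stdNormalPDF u := by
  simp [stdNormalPDF]

lemma stdNormalPDF_le_of_abs_le {x y : ℝ} (h : |x| ≤ |y|) : stdNormalPDF y ≤ stdNormalPDF x := by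
  unfold stdNormalPDF
  exact mul_le_mul_of_nonneg_left (exp_le_exp.2 (by linarith [sq_le_sq.mpr h])) (by positivity)

lemma integrable_stdNormalPDF : Integrable stdNormalPDF := by
  rw [stdNormalPDF_eq_gaussianPDFReal]
  exact integrable_gaussianPDFReal 0 1

lemma integrable_mul_stdNormalPDF : Integrable fun u : ℝ => u * stdNormalPDF u := by
  refine ((integrable_mul_exp_neg_mul_sq (b := 1 / 2) (by norm_num)).const_mul
    (√(2 * π))⁻¹).congr (Eventually.of_forall fun u => ?_)
  simp only [stdNormalPDF]
  ring_nf

lemma integral_Ioi_stdNormalPDF : ∫ u in Ioi (0 : ℝ), stdNormalPDF u = 1 / 2 := by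
  have h := integral_gaussian_Ioi (1 / 2)
  have e (u : ℝ) : -u ^ 2 / 2 = -(1 / 2) * u ^ 2 := by ring
  simp only [stdNormalPDF, e]
  rw [integral_const_mul, h, show π / (1 / 2) = 2 * π by ring]
  field_simp

lemma integral_Ioi_mul_stdNormalPDF :
    ∫ u in Ioi (0 : ℝ), u * stdNormalPDF u = (√(2 * π))⁻¹ := by
  have h := integral_mul_cexp_neg_mul_sq (b := (1 / 2 : ℂ)) (by norm_num)
  have hℂ : ∫ u in Ioi (0 : ℝ), ((u * exp (-u ^ 2 / 2) : ℝ) : ℂ) = 1 := by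
    rw [show (1 : ℂ) = (2 * (1 / 2))⁻¹ by norm_num, ← h]
    congr 1 with u
    push_cast
    ring_nf
  have hℝ : ∫ u in Ioi (0 : ℝ), u * exp (-u ^ 2 / 2) = 1 :=
    mod_cast integral_complex_ofReal.symm.trans hℂ
  simp only [stdNormalPDF, mul_left_comm _ (√(2 * π))⁻¹]
  rw [integral_const_mul, hℝ, mul_one]

lemma inv_sqrt_two_pi_lt_half : (√(2 * π))⁻¹ < 1 / 2 := by
  rw [one_div, inv_lt_inv₀ (by positivity) (by positivity), lt_sqrt zero_le_two]
  linarith [pi_gt_three]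

lemma stdNormalCDF_nonneg (t : ℝ) : 0 ≤ stdNormalCDF t :=
  setIntegral_nonneg measurableSet_Iic fun u _ => (stdNormalPDF_pos u).le

lemma stdNormalCDF_le_one (t : ℝ) : stdNormalCDF t ≤ 1 := by
  rw [← integral_gaussianPDFReal_eq_one 0 one_ne_zero, ← stdNormalPDF_eq_gaussianPDFReal]
  exact setIntegral_le_integral integrable_stdNormalPDF
    (Eventually.of_forall fun u => (stdNormalPDF_pos u).le)

lemma monotone_stdNormalCDF : Monotone stdNormalCDF := fun _ _ hab =>
  setIntegral_mono_set integrable_stdNormalPDF.integrableOn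
    (Eventually.of_forall fun u => (stdNormalPDF_pos u).le) (Iic_subset_Iic.2 hab).eventuallyLE

lemma stdNormalCDF_sub_stdNormalCDF (a b : ℝ) :
    stdNormalCDF b - stdNormalCDF a = ∫ u in a..b, stdNormalPDF u :=
  intervalIntegral.integral_Iic_sub_Iic integrable_stdNormalPDF.integrableOn
    integrable_stdNormalPDF.integrableOn

lemma mul_stdNormalPDF_le_stdNormalCDF_sub {a b : ℝ} (hab : a ≤ b) (hb : b ≤ 0) :
    (b - a) * stdNormalPDF a ≤ stdNormalCDF b - stdNormalCDF a := by
  have h := intervalIntegral.integral_mono_on (μ := volume) hab intervalIntegrable_const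
    (continuous_stdNormalPDF.intervalIntegrable a b) fun x hx =>
      stdNormalPDF_le_of_abs_le (x := x) (y := a) (by
        rw [abs_of_nonpos (hx.2.trans hb), abs_of_nonpos (hab.trans hb)]; linarith [hx.1])
  rwa [intervalIntegral.integral_const, smul_eq_mul, ← stdNormalCDF_sub_stdNormalCDF] at h

lemma stdNormalCDF_sub_le_mul_stdNormalPDF {a b : ℝ} (hab : a ≤ b) (hb : b ≤ 0) :
    stdNormalCDF b - stdNormalCDF a ≤ (b - a) * stdNormalPDF b := by
  have h := intervalIntegral.integral_mono_on (μ := volume) hab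
    (continuous_stdNormalPDF.intervalIntegrable a b) intervalIntegrable_const fun x hx =>
      stdNormalPDF_le_of_abs_le (x := b) (y := x) (by
        rw [abs_of_nonpos (hx.2.trans hb), abs_of_nonpos hb]; linarith [hx.2])
  rwa [intervalIntegral.integral_const, smul_eq_mul, ← stdNormalCDF_sub_stdNormalCDF] at h

lemma stdNormalCDF_sub_tangent_le {c u : ℝ} (hc : 0 ≤ c) (hu : 0 ≤ u) :
    stdNormalCDF (-c) - c * stdNormalPDF c * (u - 1) ≤ stdNormalCDF (-(u * c)) := by
  have huc : 0 ≤ u * c := mul_nonneg hu hc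
  rw [← stdNormalPDF_neg c]
  rcases le_total u 1 with hu1 | hu1
  · have := mul_stdNormalPDF_le_stdNormalCDF_sub (a := -c) (b := -(u * c))
      (by nlinarith) (by linarith)
    nlinarith
  · have := stdNormalCDF_sub_le_mul_stdNormalPDF (a := -(u * c)) (b := -c)
      (by nlinarith) (by linarith)
    nlinarith

lemma integrableOn_stdNormalCDF_comp_mul_stdNormalPDF (f : ℝ → ℝ) (hf : Measurable f)
    (s : Set ℝ) : IntegrableOn (fun u => stdNormalCDF (f u) * stdNormalPDF u) s := by
  refine integrable_stdNormalPDF.integrableOn.mono'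
    (((monotone_stdNormalCDF.measurable.comp hf).mul
      continuous_stdNormalPDF.measurable).aestronglyMeasurable) (Eventually.of_forall fun u => ?_)
  rw [norm_mul, Real.norm_of_nonneg (stdNormalCDF_nonneg _),
    Real.norm_of_nonneg (stdNormalPDF_pos u).le]
  exact mul_le_of_le_one_left (stdNormalPDF_pos u).le (stdNormalCDF_le_one _)

lemma integrable_affine_mul_stdNormalPDF (A B : ℝ) :
    Integrable fun u => (A - B * (u - 1)) * stdNormalPDF u :=
  ((integrable_stdNormalPDF.const_mul (A + B)).sub
    (integrable_mul_stdNormalPDF.const_mul B)).congr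
    (ae_of_all _ fun u => by simp only [Pi.sub_apply]; ring)

lemma integral_Ioi_affine_mul_stdNormalPDF (A B : ℝ) :
    ∫ u in Ioi (0 : ℝ), (A - B * (u - 1)) * stdNormalPDF u
      = (A + B) * (1 / 2) - B * (√(2 * π))⁻¹ := by
  have e (u : ℝ) : (A - B * (u - 1)) * stdNormalPDF u
      = (A + B) * stdNormalPDF u - B * (u * stdNormalPDF u) := by ring
  simp only [e]
  rw [integral_sub (integrable_stdNormalPDF.const_mul _).integrableOn
      (integrable_mul_stdNormalPDF.const_mul _).integrableOn,
    integral_const_mul, integral_const_mul, integral_Ioi_stdNormalPDF,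
    integral_Ioi_mul_stdNormalPDF]

lemma stdNormalCDF_neg_div_two_lt_integral {c : ℝ} (hc : 0 < c) :
    stdNormalCDF (-c) / 2 < ∫ u in Ioi (0 : ℝ), stdNormalCDF (-(u * c)) * stdNormalPDF u := by
  set A := stdNormalCDF (-c)
  set B := c * stdNormalPDF c
  have hB : 0 < B := mul_pos hc (stdNormalPDF_pos c)
  calc A / 2 < (A + B) * (1 / 2) - B * (√(2 * π))⁻¹ := by nlinarith [inv_sqrt_two_pi_lt_half]
    _ = ∫ u in Ioi (0 : ℝ), (A - B * (u - 1)) * stdNormalPDF u :=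
      (integral_Ioi_affine_mul_stdNormalPDF A B).symm
    _ ≤ ∫ u in Ioi (0 : ℝ), stdNormalCDF (-(u * c)) * stdNormalPDF u :=
      setIntegral_mono_on (integrable_affine_mul_stdNormalPDF A B).integrableOn
        (integrableOn_stdNormalCDF_comp_mul_stdNormalPDF _ (by fun_prop) _) measurableSet_Ioi
        fun u hu => mul_le_mul_of_nonneg_right
          (stdNormalCDF_sub_tangent_le hc.le hu.le) (stdNormalPDF_pos u).le

/-- For `l > 0`, `I > 0`, the ATMCMC limiting acceptance rate strictly exceeds the
RWMH limiting acceptance rate: `4∫₀^∞ Φ(−ul√I/2)φ(u)du > 2Φ(−l√I/2)`. -/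
theorem atmcmc_acceptance_gt_rwmh (l I : ℝ) (hl : 0 < l) (hI : 0 < I) :
    2 * stdNormalCDF (-(l * Real.sqrt I) / 2)
      < 4 * ∫ u in Set.Ioi (0 : ℝ),
          stdNormalCDF (-(u * l * Real.sqrt I) / 2) * stdNormalPDF u := by
  have hc : 0 < l * √I / 2 := by have := sqrt_pos.2 hI; positivity
  have h := stdNormalCDF_neg_div_two_lt_integral hc
  have e (u : ℝ) : -(u * l * √I) / 2 = -(u * (l * √I / 2)) := by ring
  rw [show -(l * √I) / 2 = -(l * √I / 2) by ring]
  simp only [e]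
  linarith
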